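/- Suppose λ₁ = λ₂ = … = λₙ. Then every unit vector V ∈ span(e₁, …, e_{2n}) of the oscillator algebra 𝔤ₙ(λ) is a minimal unit vector field. -/

import Mathlib

open scoped RealInnerProductSpace
open Finset

noncomputable section

/-- The underlying inner product space of the oscillator algebra `𝔤ₙ(λ)`:
a `(2n+2)`-dimensional real inner product space. -/
abbrev Osc (n : ℕ) := EuclideanSpace ℝ (Fin (2*n+2))

/-- The basis vectors `e₁, …, eₙ`. -/
def oe (n : ℕ) (i : Fin n) : Osc n :=
  EuclideanSpace.single ⟨i.1, by have := i.2; omega⟩ 1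

/-- The basis vectors `e_{n+1}, …, e_{2n}`. -/
def oE (n : ℕ) (i : Fin n) : Osc n :=
  EuclideanSpace.single ⟨n + i.1, by have := i.2; omega⟩ 1

/-- The basis vector `ξ`. -/
def oXi (n : ℕ) : Osc n := EuclideanSpace.single ⟨2*n, by omega⟩ 1

/-- The basis vector `ζ`. -/
def oZeta (n : ℕ) : Osc n := EuclideanSpace.single ⟨2*n+1, by omega⟩ 1

/-- `br` is the Lie bracket of the oscillator algebra `𝔤ₙ(λ)`: the bilinear map
determined by `[eᵢ, e_{n+j}] = δᵢⱼ ξ`, `[ζ, eⱼ] = λⱼ e_{n+j}`, `[ζ, e_{n+j}] = −λⱼ eⱼ`,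
all other brackets of basis vectors being zero. -/
structure IsOscBracket (n : ℕ) (lam : Fin n → ℝ)
    (br : Osc n →ₗ[ℝ] Osc n →ₗ[ℝ] Osc n) : Prop where
  anti : ∀ X Y : Osc n, br X Y = - br Y X
  ee : ∀ i j : Fin n, br (oe n i) (oe n j) = 0
  eE : ∀ i j : Fin n, br (oe n i) (oE n j) = if i = j then oXi n else 0
  EE : ∀ i j : Fin n, br (oE n i) (oE n j) = 0
  exi : ∀ i : Fin n, br (oe n i) (oXi n) = 0
  Exi : ∀ i : Fin n, br (oE n i) (oXi n) = 0
  zee : ∀ j : Fin n, br (oZeta n) (oe n j) = lam j • oE n j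
  zeE : ∀ j : Fin n, br (oZeta n) (oE n j) = - (lam j • oe n j)
  xize : br (oXi n) (oZeta n) = 0

/-- `nab` is the Levi-Civita connection of the left-invariant metric (evaluated on
left-invariant fields): the bilinear map determined by the Koszul formula
`2 g(∇_X Y, Z) = g([X,Y], Z) − g([Y,Z], X) + g([Z,X], Y)`. -/
def IsLeviCivita (n : ℕ) (br nab : Osc n →ₗ[ℝ] Osc n →ₗ[ℝ] Osc n) : Prop :=
  ∀ X Y Z : Osc n,
    2 * ⟪nab X Y, Z⟫ = ⟪br X Y, Z⟫ - ⟪br Y Z, X⟫ + ⟪br Z X, Y⟫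

/-- The Nomizu operator `A_V X = −∇_X V`. -/
def nomizu {n : ℕ} (nab : Osc n →ₗ[ℝ] Osc n →ₗ[ℝ] Osc n) (V X : Osc n) : Osc n :=
  -(nab X V)

/-- The covariant derivative of the Nomizu operator:
`(∇_X A_V) Y = ∇_X (A_V Y) − A_V (∇_X Y)`. -/
def covNomizu {n : ℕ} (nab : Osc n →ₗ[ℝ] Osc n →ₗ[ℝ] Osc n) (V X Y : Osc n) : Osc n :=
  nab X (nomizu nab V Y) - nomizu nab V (nab X Y)

/-- The curvature tensor `R(X,Y)Z = ∇_X ∇_Y Z − ∇_Y ∇_X Z − ∇_{[X,Y]} Z`. -/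
def curvR {n : ℕ} (br nab : Osc n →ₗ[ℝ] Osc n →ₗ[ℝ] Osc n) (X Y Z : Osc n) : Osc n :=
  nab X (nab Y Z) - nab Y (nab X Z) - nab (br X Y) Z

/-- A unit vector `V ∈ 𝔤ₙ(λ)` is a *minimal* unit vector field if there is an orthonormal
basis `u₁, …, u_{2n+2}` of eigenvectors of `A_Vᵀ A_V` (the eigenvector condition being
expressed as `g(A_V W, A_V uᵢ) = σᵢ² g(W, uᵢ)` for all `W`) with eigenvalues `σᵢ²` such that
`Σᵢ ((∇_{uᵢ} A_V)uᵢ + A_V R(V, A_V uᵢ)uᵢ)/(1 + σᵢ²) = (Σᵢ σᵢ²/(1 + σᵢ²)) V`. -/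
def IsMinimal {n : ℕ} (br nab : Osc n →ₗ[ℝ] Osc n →ₗ[ℝ] Osc n) (V : Osc n) : Prop :=
  ∃ (u : Fin (2*n+2) → Osc n) (σ : Fin (2*n+2) → ℝ),
    (∀ i j, ⟪u i, u j⟫ = if i = j then 1 else 0) ∧
    (∀ i, ∀ W : Osc n,
      ⟪nomizu nab V W, nomizu nab V (u i)⟫ = (σ i)^2 * ⟪W, u i⟫) ∧
    (∑ i, (1 + (σ i)^2)⁻¹ •
        (covNomizu nab V (u i) (u i) +
          nomizu nab V (curvR br nab V (nomizu nab V (u i)) (u i))))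
      = (∑ i, (σ i)^2 / (1 + (σ i)^2)) • V

/-- The operator `φ` with `φ eᵢ = e_{n+i}`, `φ e_{n+i} = −eᵢ`, `φ ξ = φ ζ = 0`. -/
structure IsPhi (n : ℕ) (phi : Osc n →ₗ[ℝ] Osc n) : Prop where
  he : ∀ i : Fin n, phi (oe n i) = oE n i
  hE : ∀ i : Fin n, phi (oE n i) = - oe n i
  hxi : phi (oXi n) = 0
  hzeta : phi (oZeta n) = 0

/-- The operator `E_λ` with `E_λ eᵢ = λᵢ eᵢ`, `E_λ e_{n+i} = λᵢ e_{n+i}`, `E_λ ξ = E_λ ζ = 0`. -/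
structure IsElam (n : ℕ) (lam : Fin n → ℝ) (El : Osc n →ₗ[ℝ] Osc n) : Prop where
  he : ∀ i : Fin n, El (oe n i) = lam i • oe n i
  hE : ∀ i : Fin n, El (oE n i) = lam i • oE n i
  hxi : El (oXi n) = 0
  hzeta : El (oZeta n) = 0
/-! For equal `λᵢ = l` the bracket is `[X, Y] = ⟪φX, Y⟫ ξ + l (⟪X, ζ⟫ φY - ⟪Y, ζ⟫ φX)`, and the
Koszul formula yields an explicit connection. For a horizontal unit vector `V` it gives
`A_V X = ½ ⟪X, φV⟫ ξ + ⟪X, η⟫ φV` with `η = ½ ξ - l ζ`, so `A_Vᵀ A_V` has the eigenvectors `φV`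
(eigenvalue `¼`) and `η / ‖η‖` (eigenvalue `‖η‖²`), and kills their orthogonal complement.
Completing `V, φV, η / ‖η‖` to an orthonormal basis, a direct computation shows that every basis
vector `u` satisfies `(∇_u A_V) u + A_V R(V, A_V u) u = ‖A_V u‖² V`, so the minimality equation
holds summand by summand. -/

namespace Osc

variable {n : ℕ}

lemma inner_single_single (a b : Fin (2*n+2)) :
    ⟪(EuclideanSpace.single a 1 : Osc n), EuclideanSpace.single b 1⟫ =
      if a = b then 1 else 0 :=
  orthonormal_iff_ite.1 EuclideanSpace.orthonormal_single a b

@[simp] lemma inner_oe_oe (i j : Fin n) : ⟪oe n i, oe n j⟫ = if i = j then 1 else 0 := by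
  simp [oe, inner_single_single, Fin.ext_iff]
@[simp] lemma inner_oE_oE (i j : Fin n) : ⟪oE n i, oE n j⟫ = if i = j then 1 else 0 := by
  simp [oE, inner_single_single, Fin.ext_iff]
@[simp] lemma inner_oe_oE (i j : Fin n) : ⟪oe n i, oE n j⟫ = 0 := by
  simp [oe, oE, inner_single_single, Fin.ext_iff]; omega
@[simp] lemma inner_oE_oe (i j : Fin n) : ⟪oE n i, oe n j⟫ = 0 := by
  rw [real_inner_comm, inner_oe_oE]
@[simp] lemma inner_oe_xi (i : Fin n) : ⟪oe n i, oXi n⟫ = 0 := by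
  simp [oe, oXi, inner_single_single, Fin.ext_iff]; omega
@[simp] lemma inner_xi_oe (i : Fin n) : ⟪oXi n, oe n i⟫ = 0 := by
  rw [real_inner_comm, inner_oe_xi]
@[simp] lemma inner_oE_xi (i : Fin n) : ⟪oE n i, oXi n⟫ = 0 := by
  simp [oE, oXi, inner_single_single, Fin.ext_iff]; omega
@[simp] lemma inner_xi_oE (i : Fin n) : ⟪oXi n, oE n i⟫ = 0 := by
  rw [real_inner_comm, inner_oE_xi]
@[simp] lemma inner_oe_zeta (i : Fin n) : ⟪oe n i, oZeta n⟫ = 0 := by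
  simp [oe, oZeta, inner_single_single, Fin.ext_iff]; omega
@[simp] lemma inner_zeta_oe (i : Fin n) : ⟪oZeta n, oe n i⟫ = 0 := by
  rw [real_inner_comm, inner_oe_zeta]
@[simp] lemma inner_oE_zeta (i : Fin n) : ⟪oE n i, oZeta n⟫ = 0 := by
  simp [oE, oZeta, inner_single_single, Fin.ext_iff]; omega
@[simp] lemma inner_zeta_oE (i : Fin n) : ⟪oZeta n, oE n i⟫ = 0 := by
  rw [real_inner_comm, inner_oE_zeta]
@[simp] lemma inner_xi_zeta : ⟪oXi n, oZeta n⟫ = 0 := by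
  simp [oXi, oZeta, inner_single_single, Fin.ext_iff]
@[simp] lemma inner_zeta_xi : ⟪oZeta n, oXi n⟫ = 0 := by
  rw [real_inner_comm, inner_xi_zeta]
@[simp] lemma norm_xi : ‖oXi n‖ = 1 := by simp [oXi]
@[simp] lemma norm_zeta : ‖oZeta n‖ = 1 := by simp [oZeta]

def frame (n : ℕ) : Set (Osc n) := Set.range (oe n) ∪ Set.range (oE n) ∪ {oXi n, oZeta n}

lemma single_mem_frame (k : Fin (2*n+2)) : (EuclideanSpace.single k 1 : Osc n) ∈ frame n := by
  obtain ⟨k, hk⟩ := k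
  by_cases h₁ : k < n
  · exact Or.inl (Or.inl ⟨⟨k, h₁⟩, rfl⟩)
  by_cases h₂ : k < 2 * n
  · refine Or.inl (Or.inr ⟨⟨k - n, by omega⟩, ?_⟩)
    simp only [oE, Nat.add_sub_cancel' (not_lt.1 h₁)]
  obtain rfl | rfl : k = 2 * n ∨ k = 2 * n + 1 := by omega
  exacts [Or.inr (Or.inl rfl), Or.inr (Or.inr rfl)]

lemma linearMap₂_ext_frame {M : Type*} [AddCommGroup M] [Module ℝ M]
    {f g : Osc n →ₗ[ℝ] Osc n →ₗ[ℝ] M} (h : ∀ x ∈ frame n, ∀ y ∈ frame n, f x y = g x y) :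
    f = g :=
  LinearMap.ext_basis (EuclideanSpace.basisFun _ ℝ).toBasis
    (EuclideanSpace.basisFun _ ℝ).toBasis
    fun k l => by simpa using h _ (single_mem_frame k) _ (single_mem_frame l)

def phi (n : ℕ) : Osc n →ₗ[ℝ] Osc n :=
  ∑ i, ((innerₛₗ ℝ (oe n i)).smulRight (oE n i) -
    (innerₛₗ ℝ (oE n i)).smulRight (oe n i))

lemma phi_apply (x : Osc n) :
    phi n x = ∑ i, (⟪oe n i, x⟫ • oE n i - ⟪oE n i, x⟫ • oe n i) := by
  simp [phi]

@[simp] lemma phi_oe (j : Fin n) : phi n (oe n j) = oE n j := by simp [phi_apply]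
@[simp] lemma phi_oE (j : Fin n) : phi n (oE n j) = -oe n j := by simp [phi_apply]
@[simp] lemma phi_xi : phi n (oXi n) = 0 := by simp [phi_apply]
@[simp] lemma phi_zeta : phi n (oZeta n) = 0 := by simp [phi_apply]

lemma inner_phi_left (x y : Osc n) : ⟪phi n x, y⟫ = -⟪x, phi n y⟫ := by
  simp only [phi_apply, sum_inner, inner_sum, inner_sub_left, inner_sub_right,
    real_inner_smul_left, real_inner_smul_right, ← Finset.sum_neg_distrib]
  refine Finset.sum_congr rfl fun i _ => ?_
  rw [real_inner_comm x, real_inner_comm x, real_inner_comm y (oe n i),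
    real_inner_comm y (oE n i)]
  ring

@[simp] lemma inner_phi_self (x : Osc n) : ⟪phi n x, x⟫ = 0 := by
  linarith [inner_phi_left x x, real_inner_comm (phi n x) x]
@[simp] lemma inner_self_phi (x : Osc n) : ⟪x, phi n x⟫ = 0 := by
  rw [real_inner_comm, inner_phi_self]
@[simp] lemma inner_phi_xi (x : Osc n) : ⟪phi n x, oXi n⟫ = 0 := by simp [inner_phi_left]
@[simp] lemma inner_phi_zeta (x : Osc n) : ⟪phi n x, oZeta n⟫ = 0 := by simp [inner_phi_left]
@[simp] lemma inner_xi_phi (x : Osc n) : ⟪oXi n, phi n x⟫ = 0 := by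
  rw [real_inner_comm, inner_phi_xi]
@[simp] lemma inner_zeta_phi (x : Osc n) : ⟪oZeta n, phi n x⟫ = 0 := by
  rw [real_inner_comm, inner_phi_zeta]

def bracket (n : ℕ) (l : ℝ) : Osc n →ₗ[ℝ] Osc n →ₗ[ℝ] Osc n :=
  LinearMap.mk₂ ℝ
    (fun X Y => ⟪phi n X, Y⟫ • oXi n + (l * ⟪X, oZeta n⟫) • phi n Y
      - (l * ⟪Y, oZeta n⟫) • phi n X)
    (fun X X' Y => by simp only [map_add, inner_add_left]; module)
    (fun c X Y => by simp only [map_smul, real_inner_smul_left]; module)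
    (fun X Y Y' => by simp only [map_add, inner_add_right, inner_add_left]; module)
    (fun c X Y => by simp only [map_smul, real_inner_smul_left, real_inner_smul_right]; module)

def nabla (n : ℕ) (l : ℝ) : Osc n →ₗ[ℝ] Osc n →ₗ[ℝ] Osc n :=
  LinearMap.mk₂ ℝ
    (fun X Y => (2⁻¹ * ⟪phi n X, Y⟫) • oXi n - (2⁻¹ * ⟪Y, oXi n⟫) • phi n X
      + (l * ⟪X, oZeta n⟫ - 2⁻¹ * ⟪X, oXi n⟫) • phi n Y)
    (fun X X' Y => by simp only [map_add, inner_add_left]; module)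
    (fun c X Y => by simp only [map_smul, real_inner_smul_left]; module)
    (fun X Y Y' => by simp only [map_add, inner_add_right, inner_add_left]; module)
    (fun c X Y => by simp only [map_smul, real_inner_smul_left, real_inner_smul_right]; module)

lemma bracket_apply (l : ℝ) (X Y : Osc n) :
    bracket n l X Y = ⟪phi n X, Y⟫ • oXi n + (l * ⟪X, oZeta n⟫) • phi n Y
      - (l * ⟪Y, oZeta n⟫) • phi n X := rfl

lemma nabla_apply (l : ℝ) (X Y : Osc n) :
    nabla n l X Y = (2⁻¹ * ⟪phi n X, Y⟫) • oXi n - (2⁻¹ * ⟪Y, oXi n⟫) • phi n X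
      + (l * ⟪X, oZeta n⟫ - 2⁻¹ * ⟪X, oXi n⟫) • phi n Y := rfl

lemma _root_.IsOscBracket.eq_bracket {lam : Fin n → ℝ}
    {br : Osc n →ₗ[ℝ] Osc n →ₗ[ℝ] Osc n} (hbr : IsOscBracket n lam br) {l : ℝ}
    (hl : ∀ j, lam j = l) : br = bracket n l := by
  have hself (x : Osc n) : br x x = 0 := by
    have := hbr.anti x x
    rwa [eq_neg_iff_add_eq_zero, ← two_smul ℝ, smul_eq_zero, or_iff_right two_ne_zero] at this
  refine linearMap₂_ext_frame ?_
  rintro x (⟨⟨i, rfl⟩ | ⟨i, rfl⟩⟩ | rfl | rfl) y (⟨⟨j, rfl⟩ | ⟨j, rfl⟩⟩ | rfl | rfl)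
  all_goals first
    | (simp [bracket_apply, hself, hbr.ee, hbr.eE, hbr.EE, hbr.exi, hbr.Exi, hbr.zee, hbr.zeE,
        hbr.xize, hl]; done)
    | rw [hbr.anti]
      simp [bracket_apply, hbr.eE, hbr.exi, hbr.Exi, hbr.zee, hbr.zeE, hbr.xize, hl,
        @eq_comm (Fin n)]

lemma isLeviCivita_nabla (l : ℝ) : IsLeviCivita n (bracket n l) (nabla n l) := by
  intro X Y Z
  simp only [bracket_apply, nabla_apply, inner_add_left, inner_sub_left, real_inner_smul_left]
  rw [inner_phi_left Z X, inner_phi_left Y X, inner_phi_left Z Y, real_inner_comm (phi n X) Z,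
    real_inner_comm (phi n X) Y, real_inner_comm (phi n Y) Z, real_inner_comm (oXi n) X,
    real_inner_comm (oXi n) Y]
  ring

lemma _root_.IsLeviCivita.unique {br nab nab' : Osc n →ₗ[ℝ] Osc n →ₗ[ℝ] Osc n}
    (h : IsLeviCivita n br nab) (h' : IsLeviCivita n br nab') : nab = nab' :=
  LinearMap.ext₂ fun X Y => ext_inner_right ℝ fun Z => by linarith [h X Y Z, h' X Y Z]

section Minimality

variable (br nab : Osc n →ₗ[ℝ] Osc n →ₗ[ℝ] Osc n) (V : Osc n)

def minimalityField (u : Osc n) : Osc n :=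
  covNomizu nab V u u + nomizu nab V (curvR br nab V (nomizu nab V u) u)

/-- For a unit eigenvector `u` of `A_Vᵀ A_V` the eigenvalue is `‖A_V u‖²`; this is the part of
`IsMinimal` contributed by such a `u`, balanced on its own. -/
def IsMinimalDirection (u : Osc n) : Prop :=
  (∀ W, ⟪nomizu nab V W, nomizu nab V u⟫ = ‖nomizu nab V u‖ ^ 2 * ⟪W, u⟫) ∧
    minimalityField br nab V u = ‖nomizu nab V u‖ ^ 2 • V

variable {br nab V}

lemma isMinimal_of_orthonormalBasis (b : OrthonormalBasis (Fin (2*n+2)) ℝ (Osc n))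
    (hb : ∀ i, IsMinimalDirection br nab V (b i)) : IsMinimal br nab V := by
  refine ⟨b, fun i => ‖nomizu nab V (b i)‖, orthonormal_iff_ite.1 b.orthonormal,
    fun i => (hb i).1, ?_⟩
  rw [Finset.sum_smul]
  refine Finset.sum_congr rfl fun i _ => ?_
  change _ • minimalityField br nab V (b i) = _
  rw [(hb i).2, smul_smul, div_eq_inv_mul]

lemma nomizu_smul (c : ℝ) (u : Osc n) : nomizu nab V (c • u) = c • nomizu nab V u := by
  simp [nomizu]

lemma minimalityField_smul (c : ℝ) (u : Osc n) :
    minimalityField br nab V (c • u) = c ^ 2 • minimalityField br nab V u := by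
  simp only [minimalityField, covNomizu, curvR, nomizu, map_smul, map_neg, map_sub, smul_neg,
    smul_smul, LinearMap.smul_apply, LinearMap.neg_apply, LinearMap.sub_apply]
  module

lemma isMinimalDirection_of_nomizu_eq_zero {u : Osc n} (hu : nomizu nab V u = 0)
    (hnab : nomizu nab V (nab u u) = 0) : IsMinimalDirection br nab V u := by
  refine ⟨fun W => by simp [hu], ?_⟩
  simp only [minimalityField, covNomizu, curvR, hu, hnab]
  simp [nomizu]

end Minimality

lemma _root_.Orthonormal.exists_orthonormalBasis_comp_eq {𝕜 E ι κ : Type*} [RCLike 𝕜]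
    [NormedAddCommGroup E] [InnerProductSpace 𝕜 E] [FiniteDimensional 𝕜 E] [Fintype ι]
    (hcard : Module.finrank 𝕜 E = Fintype.card ι) {v : κ → E} (hv : Orthonormal 𝕜 v)
    (f : κ ↪ ι) : ∃ b : OrthonormalBasis ι 𝕜 E, ∀ k, b (f k) = v k := by
  have hext : ∀ k, Function.extend f v 0 (f k) = v k := f.injective.extend_apply v 0
  have hv' : Orthonormal 𝕜 ((Set.range f).domRestrict (Function.extend f v 0)) := by
    convert hv.comp _ (Equiv.ofInjective f f.injective).symm.injective using 1
    ext ⟨_, k, rfl⟩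
    simp [Set.domRestrict_apply, hext]
  obtain ⟨b, hb⟩ := hv'.exists_orthonormalBasis_extension_of_card_eq hcard
  exact ⟨b, fun k => (hb _ ⟨k, rfl⟩).trans (hext k)⟩

def horizontal (n : ℕ) : Submodule ℝ (Osc n) :=
  Submodule.span ℝ (Set.range (oe n) ∪ Set.range (oE n))

lemma horizontal_le_ker : horizontal n ≤
    LinearMap.ker (innerₛₗ ℝ (oXi n)) ⊓ LinearMap.ker (innerₛₗ ℝ (oZeta n)) ⊓
      LinearMap.ker (phi n ∘ₗ phi n + LinearMap.id) := by
  rw [horizontal, Submodule.span_le]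
  rintro _ (⟨i, rfl⟩ | ⟨i, rfl⟩) <;> simp

variable {V : Osc n}

lemma inner_xi_of_mem_horizontal (hV : V ∈ horizontal n) : ⟪V, oXi n⟫ = 0 := by
  simpa [real_inner_comm] using (horizontal_le_ker hV).1.1

lemma inner_zeta_of_mem_horizontal (hV : V ∈ horizontal n) : ⟪V, oZeta n⟫ = 0 := by
  simpa [real_inner_comm] using (horizontal_le_ker hV).1.2

lemma phi_phi_of_mem_horizontal (hV : V ∈ horizontal n) : phi n (phi n V) = -V := by
  simpa [add_eq_zero_iff_eq_neg] using (horizontal_le_ker hV).2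

lemma inner_phi_phi_of_mem_horizontal (hV : V ∈ horizontal n) (X : Osc n) :
    ⟪phi n X, phi n V⟫ = ⟪X, V⟫ := by
  rw [inner_phi_left, phi_phi_of_mem_horizontal hV, inner_neg_right, neg_neg]

lemma norm_phi_of_mem_horizontal (hV : V ∈ horizontal n) : ‖phi n V‖ = ‖V‖ := by
  rw [norm_eq_sqrt_real_inner, norm_eq_sqrt_real_inner, inner_phi_phi_of_mem_horizontal hV]

section EqualLambdas

variable (l : ℝ)

def eta (n : ℕ) (l : ℝ) : Osc n := (2⁻¹ : ℝ) • oXi n - l • oZeta n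

@[simp] lemma phi_eta : phi n (eta n l) = 0 := by simp [eta]

lemma inner_eta_right (X : Osc n) :
    ⟪X, eta n l⟫ = 2⁻¹ * ⟪X, oXi n⟫ - l * ⟪X, oZeta n⟫ := by
  simp [eta, inner_sub_right, real_inner_smul_right]

lemma norm_eta_sq : ‖eta n l‖ ^ 2 = 4⁻¹ + l ^ 2 := by
  rw [← real_inner_self_eq_norm_sq, inner_eta_right]
  simp [eta, inner_sub_left, real_inner_smul_left]
  ring

lemma eta_ne_zero : eta n l ≠ 0 := fun h => by
  have := norm_eta_sq (n := n) l
  rw [h, norm_zero] at this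
  nlinarith [sq_nonneg l]

lemma nabla_self (X : Osc n) :
    nabla n l X X = (l * ⟪X, oZeta n⟫ - ⟪X, oXi n⟫) • phi n X := by
  rw [nabla_apply, inner_phi_self]
  module

lemma nabla_self_of_mem_horizontal (hV : V ∈ horizontal n) : nabla n l V V = 0 := by
  simp [nabla_self, inner_xi_of_mem_horizontal hV, inner_zeta_of_mem_horizontal hV]

@[simp] lemma nabla_phi_phi (X : Osc n) : nabla n l (phi n X) (phi n X) = 0 := by
  simp [nabla_self]

lemma nabla_xi_right (X : Osc n) : nabla n l X (oXi n) = -((2⁻¹ : ℝ) • phi n X) := by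
  simp [nabla_apply]

lemma nabla_eta_right (X : Osc n) : nabla n l X (eta n l) = -((4⁻¹ : ℝ) • phi n X) := by
  simp only [eta, map_sub, map_smul, nabla_xi_right]
  simp [nabla_apply]
  module

lemma nabla_xi_left (Y : Osc n) : nabla n l (oXi n) Y = -((2⁻¹ : ℝ) • phi n Y) := by
  simp [nabla_apply]

lemma nabla_eta_left (Y : Osc n) : nabla n l (eta n l) Y = -(‖eta n l‖ ^ 2 • phi n Y) := by
  rw [norm_eta_sq]
  simp only [eta, map_sub, map_smul, LinearMap.sub_apply, LinearMap.smul_apply, nabla_xi_left]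
  simp [nabla_apply]
  module

@[simp] lemma bracket_xi_right (X : Osc n) : bracket n l X (oXi n) = 0 := by
  simp [bracket_apply]

lemma nomizu_nabla (hV : V ∈ horizontal n) (X : Osc n) :
    nomizu (nabla n l) V X = (2⁻¹ * ⟪X, phi n V⟫) • oXi n + ⟪X, eta n l⟫ • phi n V := by
  rw [nomizu, nabla_apply, inner_phi_left, inner_xi_of_mem_horizontal hV, inner_eta_right]
  module

lemma nomizu_eta (hV : V ∈ horizontal n) :
    nomizu (nabla n l) V (eta n l) = ‖eta n l‖ ^ 2 • phi n V := by
  simp [nomizu_nabla l hV, eta, inner_sub_left, real_inner_smul_left]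

lemma minimalityField_eta (hV : V ∈ horizontal n) :
    minimalityField (bracket n l) (nabla n l) V (eta n l) = ‖eta n l‖ ^ 4 • V := by
  simp only [minimalityField, covNomizu, curvR, nomizu_eta l hV]
  simp [nabla_eta_right, nabla_eta_left, nabla_self_of_mem_horizontal l hV, nomizu,
    phi_phi_of_mem_horizontal hV, bracket_apply, inner_zeta_of_mem_horizontal hV]
  module

lemma isMinimalDirection_self (hV : V ∈ horizontal n) :
    IsMinimalDirection (bracket n l) (nabla n l) V V := by
  refine isMinimalDirection_of_nomizu_eq_zero ?_ ?_
  · simp [nomizu_nabla l hV, inner_eta_right, inner_xi_of_mem_horizontal hV,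
      inner_zeta_of_mem_horizontal hV]
  · simp [nabla_self_of_mem_horizontal l hV, nomizu]

lemma isMinimalDirection_of_orthogonal (hV : V ∈ horizontal n) {u : Osc n}
    (hφ : ⟪u, phi n V⟫ = 0) (hη : ⟪u, eta n l⟫ = 0) (hu : ⟪u, V⟫ = 0) :
    IsMinimalDirection (bracket n l) (nabla n l) V u := by
  refine isMinimalDirection_of_nomizu_eq_zero ?_ ?_
  · simp [nomizu_nabla l hV, hφ, hη]
  · simp [nabla_self, nomizu_nabla l hV, real_inner_smul_left,
      inner_phi_phi_of_mem_horizontal hV, hu, inner_eta_right]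

lemma isMinimalDirection_phi (hV : V ∈ horizontal n) (hV1 : ‖V‖ = 1) :
    IsMinimalDirection (bracket n l) (nabla n l) V (phi n V) := by
  have hφV : ‖phi n V‖ = 1 := (norm_phi_of_mem_horizontal hV).trans hV1
  have hA : nomizu (nabla n l) V (phi n V) = (2⁻¹ : ℝ) • oXi n := by
    simp [nomizu_nabla l hV, hφV, inner_eta_right]
  have hnab : nabla n l V (phi n V) = (2⁻¹ : ℝ) • oXi n := by
    simp [nabla_apply, hφV, inner_xi_of_mem_horizontal hV, inner_zeta_of_mem_horizontal hV]
  refine ⟨fun W => ?_, ?_⟩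
  · simp [hA, nomizu_nabla l hV, inner_add_left, real_inner_smul_left, real_inner_smul_right,
      norm_smul]
    ring
  · simp only [minimalityField, covNomizu, curvR, hA]
    simp [nabla_xi_right, nabla_xi_left, nabla_self_of_mem_horizontal l hV, nomizu,
      phi_phi_of_mem_horizontal hV, hnab, norm_smul]
    module

lemma isMinimalDirection_eta (hV : V ∈ horizontal n) (hV1 : ‖V‖ = 1) :
    IsMinimalDirection (bracket n l) (nabla n l) V (‖eta n l‖⁻¹ • eta n l) := by
  have hη : ‖eta n l‖ ≠ 0 := norm_ne_zero_iff.2 (eta_ne_zero l)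
  have hφV : ‖phi n V‖ = 1 := (norm_phi_of_mem_horizontal hV).trans hV1
  have hA : nomizu (nabla n l) V (‖eta n l‖⁻¹ • eta n l) = ‖eta n l‖ • phi n V := by
    rw [nomizu_smul, nomizu_eta l hV, smul_smul]
    field_simp
  refine ⟨fun W => ?_, ?_⟩
  · simp [hA, nomizu_nabla l hV, inner_add_left, real_inner_smul_left, real_inner_smul_right,
      norm_smul, hφV]
    field_simp
  · rw [minimalityField_smul, minimalityField_eta l hV, hA, norm_smul, hφV, norm_norm,
      smul_smul]
    field_simp

lemma isMinimal_nabla (hn : 1 ≤ n) (hV : V ∈ horizontal n) (hV1 : ‖V‖ = 1) :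
    IsMinimal (bracket n l) (nabla n l) V := by
  have hη : ‖eta n l‖ ≠ 0 := norm_ne_zero_iff.2 (eta_ne_zero l)
  have hVη : ⟪V, eta n l⟫ = 0 := by
    simp [inner_eta_right, inner_xi_of_mem_horizontal hV, inner_zeta_of_mem_horizontal hV]
  have hφVη : ⟪phi n V, eta n l⟫ = 0 := by simp [inner_eta_right]
  set w := ‖eta n l‖⁻¹ • eta n l
  have horth : Orthonormal ℝ ![V, phi n V, w] := by
    rw [orthonormal_iff_ite]
    intro i j
    fin_cases i <;> fin_cases j <;>
      simp [w, real_inner_smul_left, real_inner_smul_right, hVη, hφVη,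
        real_inner_comm _ (eta n l), norm_smul, inv_mul_cancel₀ hη,
        norm_phi_of_mem_horizontal hV, hV1]
  obtain ⟨b, hb⟩ := horth.exists_orthonormalBasis_comp_eq (by simp)
    (Fin.castLEEmb (by omega : 3 ≤ 2 * n + 2))
  refine isMinimal_of_orthonormalBasis b fun i => ?_
  by_cases hi : i ∈ Set.range (Fin.castLEEmb (by omega : 3 ≤ 2 * n + 2))
  · obtain ⟨k, rfl⟩ := hi
    rw [hb]
    fin_cases k
    exacts [isMinimalDirection_self l hV, isMinimalDirection_phi l hV hV1,
      isMinimalDirection_eta l hV hV1]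
  · have hperp (k : Fin 3) : ⟪b i, ![V, phi n V, w] k⟫ = 0 := by
      rw [← hb]
      exact b.orthonormal.2 fun h => hi ⟨k, h.symm⟩
    refine isMinimalDirection_of_orthogonal l hV (hperp 1) ?_ (hperp 0)
    simpa [w, real_inner_smul_right, hη] using hperp 2

end EqualLambdas

end Osc

/-- If `λ₁ = … = λₙ`, then every unit `V ∈ span(e₁,…,e_{2n})` is a minimal unit
vector field on the oscillator group. -/
theorem minimal_equal_lambdas (n : ℕ) (hn : 1 ≤ n) (lam : Fin n → ℝ)
    (hlam : ∀ i j : Fin n, lam i = lam j)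
    (br nab : Osc n →ₗ[ℝ] Osc n →ₗ[ℝ] Osc n)
    (hbr : IsOscBracket n lam br) (hlc : IsLeviCivita n br nab)
    (V : Osc n)
    (hV : V ∈ Submodule.span ℝ (Set.range (oe n) ∪ Set.range (oE n)))
    (hVunit : ‖V‖ = 1) :
    IsMinimal br nab V := by
  obtain ⟨l, hl⟩ : ∃ l, ∀ j, lam j = l := ⟨lam ⟨0, hn⟩, fun j => hlam j _⟩
  obtain rfl := hbr.eq_bracket hl
  obtain rfl := hlc.unique (Osc.isLeviCivita_nabla l)
  exact Osc.isMinimal_nabla l hn hV hVunit
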